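/- If A, B are bounded operators with [A,B] trace class, then (AB)^n − (BA)^n is trace class for every n ≥ 1, and (AB)^n − (BA)^n = [A(BA)^{n−1}, B] modulo operators of trace zero; in particular Tr((AB)^n − (BA)^n) = Tr[A(BA)^{n−1}, B]. -/

import Mathlib

/-!
Since `(AB)ⁿ = A(BA)ⁿ⁻¹B` and `(BA)ⁿ = BA(BA)ⁿ⁻¹`, the difference `(AB)ⁿ − (BA)ⁿ` *equals* the
commutator `[A(BA)ⁿ⁻¹, B]`; the content is that it is trace class, which follows once the trace
class operators form a two-sided ideal, because `AB ≡ BA` modulo an ideal implies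
`(AB)ⁿ ≡ (BA)ⁿ`.

For the ideal property, split an operator into real and imaginary parts and write a self-adjoint
`S` as `√S⁺² − √S⁻²`. In a Hilbert basis adapted to `ker S⁺ ⊕ (ker S⁺)ᗮ` the diagonal of `S`
dominates `‖√S⁺ e‖²`, so `√S⁺` (and likewise `√S⁻`) is Hilbert–Schmidt. Hence `X S Y` is a
difference of products of two Hilbert–Schmidt operators, whose diagonals are absolutely summable
by Cauchy–Schwarz.
-/

open MeasureTheory

variable {H : Type} [NormedAddCommGroup H] [InnerProductSpace ℂ H]

/-- A bounded operator is trace class when its diagonal is absolutely summable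
in every Hilbert basis. -/
def IsTraceClass (T : H →L[ℂ] H) : Prop :=
  ∀ (ι : Type) (e : HilbertBasis ι ℂ H),
    Summable fun i => ‖(inner ℂ (e i) (T (e i)) : ℂ)‖

open scoped ENNReal InnerProductSpace ComplexStarModule
open ContinuousLinearMap

section HilbertSchmidt

universe u

variable {𝕜 : Type*} [RCLike 𝕜] {E F G : Type u}
  [NormedAddCommGroup E] [InnerProductSpace 𝕜 E]
  [NormedAddCommGroup F] [InnerProductSpace 𝕜 F]
  [NormedAddCommGroup G] [InnerProductSpace 𝕜 G]

theorem HilbertBasis.hasSum_norm_inner_sq {ι : Type*} (b : HilbertBasis ι 𝕜 E) (x : E) :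
    HasSum (fun i => ‖⟪b i, x⟫_𝕜‖ ^ 2) (‖x‖ ^ 2) := by
  simpa [b.repr_apply_apply] using lp.hasSum_norm (p := 2) (by norm_num) (b.repr x)

theorem HilbertBasis.tsum_enorm_inner_sq {ι : Type*} (b : HilbertBasis ι 𝕜 E) (x : E) :
    ∑' i, ‖⟪b i, x⟫_𝕜‖ₑ ^ 2 = ‖x‖ₑ ^ 2 := by
  have h := b.hasSum_norm_inner_sq x
  simp_rw [← ofReal_norm, ← ENNReal.ofReal_pow (norm_nonneg _), ← h.tsum_eq]
  exact (ENNReal.ofReal_tsum_of_nonneg (fun _ => by positivity) h.summable).symm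

theorem tsum_enorm_sq_ne_top_iff {ι : Type*} (v : ι → E) :
    ∑' i, ‖v i‖ₑ ^ 2 ≠ ∞ ↔ Summable fun i => ‖v i‖ ^ 2 := by
  simp_rw [← ofReal_norm, ← ENNReal.ofReal_pow (norm_nonneg _)]
  refine ⟨fun h => ?_, Summable.tsum_ofReal_ne_top⟩
  simpa using ENNReal.summable_toReal h

theorem Submodule.exists_hilbertBasis_mem_or_mem_orthogonal [CompleteSpace E]
    (K : Submodule 𝕜 E) [CompleteSpace K] :
    ∃ (w : Set E) (b : HilbertBasis w 𝕜 E), ∀ i, b i ∈ K ∨ b i ∈ Kᗮ := by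
  obtain ⟨w₀, b₀, -⟩ := exists_hilbertBasis 𝕜 K
  have hs : Orthonormal 𝕜 ((↑) : Set.range (fun i => (b₀ i : E)) → E) :=
    (b₀.orthonormal.comp_linearIsometry K.subtypeₗᵢ).toSubtypeRange
  obtain ⟨w, b, hsw, hb⟩ := hs.exists_hilbertBasis_extension
  refine ⟨w, b, fun v => ?_⟩
  by_cases hv : (v : E) ∈ Set.range (fun i => (b₀ i : E))
  · obtain ⟨i, hi⟩ := hv
    exact .inl (by rw [hb, ← hi]; exact (b₀ i).2)
  · refine .inr (K.orthogonalProjectionOnto_eq_zero_iff.mp (b₀.repr.injective ?_))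
    ext i
    have hne : (⟨b₀ i, hsw ⟨i, rfl⟩⟩ : w) ≠ v := fun h => hv (h ▸ ⟨i, rfl⟩)
    simpa [b₀.repr_apply_apply, hb] using b.orthonormal.2 hne

theorem ContinuousLinearMap.orthogonal_orthogonal_range_le_ker [CompleteSpace F]
    {P : E →L[𝕜] F} {N : F →L[𝕜] G} (h : N ∘L P = 0) :
    (LinearMap.range (P : E →ₗ[𝕜] F))ᗮᗮ ≤ LinearMap.ker (N : F →ₗ[𝕜] G) := by
  rw [Submodule.orthogonal_orthogonal_eq_closure]
  refine Submodule.topologicalClosure_minimal _ ?_ N.isClosed_ker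
  rintro _ ⟨y, rfl⟩
  exact congr($h y)

def IsHilbertSchmidt (T : E →L[𝕜] F) : Prop :=
  ∀ (ι : Type u) (e : HilbertBasis ι 𝕜 E), ∑' i, ‖T (e i)‖ₑ ^ 2 ≠ ∞

theorem IsHilbertSchmidt.summable_norm_sq {T : E →L[𝕜] F} (hT : IsHilbertSchmidt T)
    {ι : Type u} (e : HilbertBasis ι 𝕜 E) : Summable fun i => ‖T (e i)‖ ^ 2 :=
  (tsum_enorm_sq_ne_top_iff _).mp (hT ι e)

theorem IsHilbertSchmidt.comp_left {T : E →L[𝕜] F} (hT : IsHilbertSchmidt T) (X : F →L[𝕜] G) :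
    IsHilbertSchmidt (X ∘L T) := by
  intro ι e
  have hle : ∑' i, ‖X (T (e i))‖ₑ ^ 2 ≤ ‖X‖ₑ ^ 2 * ∑' i, ‖T (e i)‖ₑ ^ 2 := by
    rw [← ENNReal.tsum_mul_left]
    exact ENNReal.tsum_le_tsum fun i => by rw [← mul_pow]; gcongr; exact X.le_opENorm _
  exact ne_top_of_le_ne_top (ENNReal.mul_ne_top (by simp) (hT ι e)) hle

variable [CompleteSpace E] [CompleteSpace F]

theorem ContinuousLinearMap.tsum_enorm_apply_sq_eq_adjoint {ι κ : Type*} (T : E →L[𝕜] F)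
    (e : HilbertBasis ι 𝕜 E) (f : HilbertBasis κ 𝕜 F) :
    ∑' i, ‖T (e i)‖ₑ ^ 2 = ∑' j, ‖adjoint T (f j)‖ₑ ^ 2 :=
  calc ∑' i, ‖T (e i)‖ₑ ^ 2 = ∑' i, ∑' j, ‖⟪f j, T (e i)⟫_𝕜‖ₑ ^ 2 := by
        simp_rw [f.tsum_enorm_inner_sq]
    _ = ∑' j, ∑' i, ‖⟪e i, adjoint T (f j)⟫_𝕜‖ₑ ^ 2 := by
        rw [ENNReal.tsum_comm]
        simp_rw [← adjoint_inner_left T, ← inner_conj_symm (e _), RCLike.enorm_conj]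
    _ = ∑' j, ‖adjoint T (f j)‖ₑ ^ 2 := by simp_rw [e.tsum_enorm_inner_sq]

theorem IsHilbertSchmidt.adjoint {T : E →L[𝕜] F} (hT : IsHilbertSchmidt T) :
    IsHilbertSchmidt (adjoint T) := by
  intro κ f
  obtain ⟨w, e, -⟩ := exists_hilbertBasis 𝕜 E
  rw [← T.tsum_enorm_apply_sq_eq_adjoint e f]
  exact hT w e

theorem isHilbertSchmidt_of_tsum_ne_top {ι : Type*} {T : E →L[𝕜] F} (e : HilbertBasis ι 𝕜 E)
    (h : ∑' i, ‖T (e i)‖ₑ ^ 2 ≠ ∞) : IsHilbertSchmidt T := by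
  intro κ f
  obtain ⟨w, g, -⟩ := exists_hilbertBasis 𝕜 F
  rwa [T.tsum_enorm_apply_sq_eq_adjoint f g, ← T.tsum_enorm_apply_sq_eq_adjoint e g]

theorem IsHilbertSchmidt.comp_right [CompleteSpace G] {T : E →L[𝕜] F} (hT : IsHilbertSchmidt T)
    (Y : G →L[𝕜] E) : IsHilbertSchmidt (T ∘L Y) := by
  simpa [adjoint_comp] using (hT.adjoint.comp_left (ContinuousLinearMap.adjoint Y)).adjoint

end HilbertSchmidt

namespace IsTraceClass

theorem zero : IsTraceClass (0 : H →L[ℂ] H) := fun ι e => by simp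

theorem add {T U : H →L[ℂ] H} (hT : IsTraceClass T) (hU : IsTraceClass U) :
    IsTraceClass (T + U) := fun ι e =>
  .of_nonneg_of_le (fun _ => norm_nonneg _)
    (fun i => by simpa [inner_add_right] using norm_add_le _ _) ((hT ι e).add (hU ι e))

theorem neg {T : H →L[ℂ] H} (hT : IsTraceClass T) : IsTraceClass (-T) := fun ι e => by
  simpa using hT ι e

theorem sub {T U : H →L[ℂ] H} (hT : IsTraceClass T) (hU : IsTraceClass U) :
    IsTraceClass (T - U) := by
  rw [sub_eq_add_neg]; exact hT.add hU.neg

theorem smul {T : H →L[ℂ] H} (hT : IsTraceClass T) (c : ℂ) : IsTraceClass (c • T) :=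
  fun ι e => by simpa [inner_smul_right] using (hT ι e).mul_left ‖c‖

theorem star [CompleteSpace H] {T : H →L[ℂ] H} (hT : IsTraceClass T) : IsTraceClass (star T) :=
  fun ι e => (hT ι e).congr fun i => by
    rw [star_eq_adjoint, adjoint_inner_right, ← inner_conj_symm, RCLike.norm_conj]

end IsTraceClass

section TraceClassIdeal

variable [CompleteSpace H]

theorem IsHilbertSchmidt.isTraceClass_mul {S T : H →L[ℂ] H} (hS : IsHilbertSchmidt S)
    (hT : IsHilbertSchmidt T) : IsTraceClass (S * T) := by
  intro ι e
  refine .of_nonneg_of_le (fun _ => norm_nonneg _) (fun i => ?_)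
    (((hS.adjoint.summable_norm_sq e).add (hT.summable_norm_sq e)).div_const 2)
  rw [mul_apply_eq_comp, ← adjoint_inner_left]
  nlinarith [norm_inner_le_norm (𝕜 := ℂ) (ContinuousLinearMap.adjoint S (e i)) (T (e i)),
    sq_nonneg (‖ContinuousLinearMap.adjoint S (e i)‖ - ‖T (e i)‖)]

theorem IsSelfAdjoint.isHilbertSchmidt_sqrt_posPart {S : H →L[ℂ] H} (hS : IsSelfAdjoint S)
    (hT : IsTraceClass S) : IsHilbertSchmidt (CFC.sqrt S⁺) := by
  set R := CFC.sqrt S⁺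
  have hR : IsSelfAdjoint R := (CFC.sqrt_nonneg _).isSelfAdjoint
  have hnorm (x : H) : ‖R x‖ ^ 2 = RCLike.re ⟪x, S⁺ x⟫_ℂ := by
    rw [R.apply_norm_sq_eq_inner_adjoint_right, hR.adjoint_eq, ← mul_def,
      CFC.sqrt_mul_sqrt_self S⁺ (CFC.posPart_nonneg S)]
  set K := (LinearMap.range ((S⁺ : H →L[ℂ] H) : H →ₗ[ℂ] H))ᗮ
  obtain ⟨w, b, hb⟩ := K.exists_hilbertBasis_mem_or_mem_orthogonal
  refine isHilbertSchmidt_of_tsum_ne_top b ((tsum_enorm_sq_ne_top_iff _).mpr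
    (.of_nonneg_of_le (fun _ => sq_nonneg _) (fun i => ?_) (hT w b)))
  rcases hb i with hK | hK
  · have h0 : ⟪S⁺ (b i), b i⟫_ℂ = 0 :=
      (Submodule.mem_orthogonal _ _).mp hK _ (LinearMap.mem_range_self _ _)
    rw [hnorm, inner_eq_zero_symm.mp h0, map_zero]
    exact norm_nonneg _
  · have hneg : S⁻ (b i) = 0 :=
      orthogonal_orthogonal_range_le_ker (by rw [← mul_def, CFC.negPart_mul_posPart]) hK
    have hpos : S (b i) = S⁺ (b i) := by
      conv_lhs => rw [← CFC.posPart_sub_negPart S]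
      simp [hneg]
    rw [hnorm, ← hpos]
    exact RCLike.re_le_norm _

theorem IsSelfAdjoint.isTraceClass_mul_mul {S : H →L[ℂ] H} (hS : IsSelfAdjoint S)
    (hT : IsTraceClass S) (X Y : H →L[ℂ] H) : IsTraceClass (X * S * Y) := by
  have hP := hS.isHilbertSchmidt_sqrt_posPart hT
  have hN := hS.neg.isHilbertSchmidt_sqrt_posPart hT.neg
  rw [CFC.posPart_neg] at hN
  have hXSY : X * S * Y = (X * CFC.sqrt S⁺) * (CFC.sqrt S⁺ * Y)
      - (X * CFC.sqrt S⁻) * (CFC.sqrt S⁻ * Y) := by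
    conv_lhs => rw [← CFC.posPart_sub_negPart S, ← CFC.sqrt_mul_sqrt_self S⁺,
      ← CFC.sqrt_mul_sqrt_self S⁻]
    noncomm_ring
  rw [hXSY]
  exact ((hP.comp_left X).isTraceClass_mul (hP.comp_right Y)).sub
    ((hN.comp_left X).isTraceClass_mul (hN.comp_right Y))

theorem IsTraceClass.mul_mul {C : H →L[ℂ] H} (hC : IsTraceClass C) (X Y : H →L[ℂ] H) :
    IsTraceClass (X * C * Y) := by
  have hre : IsTraceClass (ℜ C : H →L[ℂ] H) := by
    rw [realPart_apply_coe, ← Complex.coe_smul]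
    exact (hC.add hC.star).smul _
  have him : IsTraceClass (ℑ C : H →L[ℂ] H) := by
    rw [imaginaryPart_apply_coe, ← Complex.coe_smul]
    exact ((hC.sub hC.star).smul _).smul _
  rw [← realPart_add_I_smul_imaginaryPart C, mul_add, add_mul, mul_smul_comm, smul_mul_assoc]
  exact ((ℜ C).2.isTraceClass_mul_mul hre X Y).add
    (((ℑ C).2.isTraceClass_mul_mul him X Y).smul _)

def traceClassIdeal : TwoSidedIdeal (H →L[ℂ] H) :=
  .mk' {T | IsTraceClass T} .zero .add .neg
    (fun {X T} hT => by simpa using hT.mul_mul X 1)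
    (fun {T Y} hT => by simpa using hT.mul_mul 1 Y)

theorem mem_traceClassIdeal {T : H →L[ℂ] H} : T ∈ traceClassIdeal ↔ IsTraceClass T :=
  TwoSidedIdeal.mem_mk' _ _ _ _ _ _ T

end TraceClassIdeal

/-- If `[A,B]` is trace class then for every `n ≥ 1` the operator
`(AB)ⁿ − (BA)ⁿ` is trace class, it agrees with the commutator
`[A(BA)^{n−1}, B]` modulo operators of trace zero, and in particular
`Tr((AB)ⁿ − (BA)ⁿ) = Tr[A(BA)^{n−1}, B]`. -/
theorem trace_power_commutator [CompleteSpace H]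
    (A B : H →L[ℂ] H) (h : IsTraceClass (A * B - B * A)) (n : ℕ) (hn : 1 ≤ n) :
    IsTraceClass ((A * B) ^ n - (B * A) ^ n) ∧
    IsTraceClass ((A * (B * A) ^ (n - 1)) * B - B * (A * (B * A) ^ (n - 1))) ∧
    (∀ (ι : Type) (e : HilbertBasis ι ℂ H),
      HasSum (fun i => (inner ℂ (e i)
        ((((A * B) ^ n - (B * A) ^ n) -
          ((A * (B * A) ^ (n - 1)) * B - B * (A * (B * A) ^ (n - 1)))) (e i)) : ℂ)) 0) ∧
    ∀ (ι : Type) (e : HilbertBasis ι ℂ H),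
      ∑' i, (inner ℂ (e i) (((A * B) ^ n - (B * A) ^ n) (e i)) : ℂ) =
      ∑' i, (inner ℂ (e i)
        (((A * (B * A) ^ (n - 1)) * B - B * (A * (B * A) ^ (n - 1))) (e i)) : ℂ) := by
  have hpow : IsTraceClass ((A * B) ^ n - (B * A) ^ n) := by
    rw [← mem_traceClassIdeal, ← TwoSidedIdeal.rel_iff] at h ⊢
    exact traceClassIdeal.ringCon.toCon.pow n h
  obtain ⟨m, rfl⟩ := Nat.exists_eq_add_of_le' hn
  have hcomm : (A * B) ^ (m + 1) - (B * A) ^ (m + 1)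
      = (A * (B * A) ^ (m + 1 - 1)) * B - B * (A * (B * A) ^ (m + 1 - 1)) := by
    rw [Nat.add_sub_cancel, pow_succ, ← mul_assoc, mul_pow_mul, pow_succ']
    simp only [mul_assoc]
  refine ⟨hpow, hcomm ▸ hpow, fun ι e => ?_, fun ι e => by rw [hcomm]⟩
  rw [hcomm, sub_self]
  simp
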